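/- For every prime p, Σ_{k=1}^{p-1} ⌊k^5/p⌋ = (1/12)·(p-2)(p-1)(p+1)(2p^2 - 2p + 3). -/

import Mathlib

/-!
Write `⌊k⁵/p⌋ = (k⁵ - r_k)/p` with `r_k = k⁵ mod p`. Since `5` is odd, `p ∣ k⁵ + (p - k)⁵`, and
`p ∤ k⁵` for `0 < k < p`, so the residues pair up as `r_k + r_{p-k} = p` and sum to `p(p-1)/2`.
The claim then follows from Faulhaber's formula for `∑ k⁵`.
-/

open Finset

theorem Nat.mod_add_mod_eq_self_of_dvd_add {a b m : ℕ} (hab : m ∣ a + b) (ha : ¬ m ∣ a) :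
    a % m + b % m = m := by
  have hm : 0 < m := Nat.pos_of_ne_zero (by rintro rfl; simp_all)
  have ha' : a % m ≠ 0 := fun h => ha (Nat.dvd_of_mod_eq_zero h)
  have hdvd : m ∣ a % m + b % m := by
    rwa [Nat.dvd_iff_mod_eq_zero, ← Nat.add_mod, ← Nat.dvd_iff_mod_eq_zero]
  obtain ⟨c, hc⟩ := hdvd
  have hlt : a % m + b % m < m * 2 := by
    have := Nat.mod_lt a hm; have := Nat.mod_lt b hm; omega
  have hc1 : c = 1 := by
    rcases c with _ | _ | c
    · omega
    · rfl
    · nlinarith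
  rw [hc, hc1, mul_one]

theorem Nat.Prime.pow_mod_add_sub_pow_mod {p n k : ℕ} (hp : p.Prime) (hn : Odd n)
    (hk0 : 0 < k) (hkp : k < p) : k ^ n % p + (p - k) ^ n % p = p := by
  apply Nat.mod_add_mod_eq_self_of_dvd_add
  · simpa [Nat.add_sub_cancel' hkp.le] using Odd.nat_add_dvd_pow_add_pow k (p - k) hn
  · exact fun h => Nat.not_dvd_of_pos_of_lt hk0 hkp (hp.dvd_of_dvd_pow h)

theorem Nat.Prime.two_mul_sum_pow_mod {p n : ℕ} (hp : p.Prime) (hn : Odd n) :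
    2 * ∑ k ∈ Icc 1 (p - 1), k ^ n % p = p * (p - 1) := by
  have hreflect : ∑ k ∈ Icc 1 (p - 1), k ^ n % p = ∑ k ∈ Icc 1 (p - 1), (p - k) ^ n % p :=
    sum_nbij' (p - ·) (p - ·) (by simp; omega) (by simp; omega) (by simp; omega)
      (by simp; omega) (by simp; intros; congr; omega)
  calc 2 * ∑ k ∈ Icc 1 (p - 1), k ^ n % p
      = ∑ k ∈ Icc 1 (p - 1), (k ^ n % p + (p - k) ^ n % p) := by
        rw [sum_add_distrib, ← hreflect, two_mul]
    _ = ∑ _k ∈ Icc 1 (p - 1), p :=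
        sum_congr rfl fun k hk => by
          rw [mem_Icc] at hk
          exact hp.pow_mod_add_sub_pow_mod hn (by omega) (by omega)
    _ = p * (p - 1) := by simp [mul_comm]

theorem sum_Icc_pow_five (n : ℕ) :
    ∑ k ∈ Icc 1 n, (k : ℚ) ^ 5 = (n : ℚ) ^ 2 * (n + 1) ^ 2 * (2 * n ^ 2 + 2 * n - 1) / 12 := by
  induction n with
  | zero => simp
  | succ n ih => rw [sum_Icc_succ_top (by omega), ih]; push_cast; ring

theorem Int.cast_floor_natCast_div_natCast {K : Type*} [Field K] [LinearOrder K]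
    [IsStrictOrderedRing K] [FloorRing K] (a : ℕ) {m : ℕ} (hm : m ≠ 0) :
    (⌊(a : K) / m⌋ : K) = ((a : K) - (a % m : ℕ)) / m := by
  rw [← Int.natCast_floor_eq_floor (by positivity), Nat.floor_div_eq_div, Int.cast_natCast,
    eq_div_iff (by exact_mod_cast hm), eq_sub_iff_add_eq, mul_comm]
  exact_mod_cast Nat.div_add_mod a m

theorem stmt_9 (p : ℕ) (hp : p.Prime) :
    (∑ k ∈ Finset.Icc 1 (p - 1), (⌊((k : ℚ) ^ 5) / p⌋ : ℚ)) =
      (1 / 12) * ((p : ℚ) - 2) * ((p : ℚ) - 1) * ((p : ℚ) + 1) *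
        (2 * (p : ℚ) ^ 2 - 2 * p + 3) := by
  have hp0 : (p : ℚ) ≠ 0 := by exact_mod_cast hp.ne_zero
  have hfloor : ∀ k : ℕ, (⌊((k : ℚ) ^ 5) / p⌋ : ℚ) = ((k : ℚ) ^ 5 - (k ^ 5 % p : ℕ)) / p := by
    intro k
    exact_mod_cast Int.cast_floor_natCast_div_natCast (K := ℚ) (k ^ 5) hp.ne_zero
  have hpowers := sum_Icc_pow_five (p - 1)
  have hresidues : (2 : ℚ) * ∑ k ∈ Icc 1 (p - 1), ((k ^ 5 % p : ℕ) : ℚ) = p * ((p - 1 : ℕ) : ℚ) := by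
    exact_mod_cast hp.two_mul_sum_pow_mod (n := 5) (by decide)
  rw [Nat.cast_pred hp.pos] at hpowers hresidues
  simp only [hfloor, ← sum_div, sum_sub_distrib, hpowers]
  field_simp
  linear_combination (-6 : ℚ) * hresidues
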